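/- Let Q_j(u) be defined as det(M_{1,…,j})/det(V_{1,…,j}) as in the tRS setting (with q_i(u) = u − p_i, shifts by powers of ħ^{−1/2}, and Vandermonde V). Then Q_n(u) = det(u·I − L), where L is the n×n matrix L_{ij} = ( ∏_{k ≠ j} (ħ^{−1/2}ζ_i − ħ^{1/2}ζ_k) / ∏_{k ≠ i} (ζ_i − ζ_k) ) p_j. -/

import Mathlib

open Finset

noncomputable def Mdet {K : Type*} [Field K] {n : ℕ} (ζ p : Fin n → K) (h : K)
    (j : ℕ) (row : Fin j → Fin n) (u : K) : K :=
  Matrix.det (Matrix.of fun a b : Fin j =>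
    ζ (row a) ^ (b : ℕ) *
      (h ^ (-((j : ℤ) - 1 - 2 * ((b : ℕ) : ℤ))) * u - p (row a)))

noncomputable def Vdet {K : Type*} [Field K] {n : ℕ} (ζ : Fin n → K)
    (j : ℕ) (row : Fin j → Fin n) : K :=
  Matrix.det (Matrix.of fun a b : Fin j => ζ (row a) ^ (b : ℕ))

noncomputable def Qfun {K : Type*} [Field K] {n : ℕ} (ζ p : Fin n → K) (h : K)
    (j : ℕ) (hj : j ≤ n) (u : K) : K :=
  Mdet ζ p h j (fun a => ⟨a, lt_of_lt_of_le a.isLt hj⟩) u /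
    Vdet ζ j (fun a => ⟨a, lt_of_lt_of_le a.isLt hj⟩)

/-- The tRS Lax matrix with t = ħ^{1/2} = h. -/
noncomputable def tRSLax {K : Type*} [Field K] (n : ℕ) (ζ p : Fin n → K) (h : K) :
    Matrix (Fin n) (Fin n) K :=
  Matrix.of fun i j =>
    ((∏ k ∈ univ.erase j, (h⁻¹ * ζ i - h * ζ k)) /
      (∏ k ∈ univ.erase i, (ζ i - ζ k))) * p j

/-! With `ħ = h²`, the matrix of `Qfun` is `u • W - diagonal p * V`, where `V` is the Vandermonde
matrix of `ζ` and `W = h^{-(n-1)} • vandermonde (h² ζ)` has the same determinant as `V`. Lagrange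
interpolation at the nodes `h² ζ`, evaluated at `ζ`, gives a matrix `G` with `G * W = V`; hence
`det G = 1` and `G * (u • W - diagonal p * V) = (u • 1 - G * diagonal p) * V`, so `Qfun` equals
`det (u • 1 - G * diagonal p)`. Finally `tRSLax` is conjugate to `G * diagonal p` by the diagonal
matrix with entries `∏_{k ≠ i} (ζ i - ζ k)`. -/

open Matrix

theorem Fin.prod_sq_pow_val {M : Type*} [CommMonoid M] {n : ℕ} (c : M) :
    ∏ j : Fin n, (c ^ 2) ^ (j : ℕ) = (c ^ (n - 1)) ^ n := by
  rw [prod_pow_eq_pow_sum, Fin.sum_univ_eq_sum_range (fun j => j), ← pow_mul, ← pow_mul,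
    mul_comm 2, sum_range_id_mul_two, mul_comm]

namespace Matrix

section Similarity

variable {R : Type*} [CommRing R] [IsDomain R] {m : Type*} [Fintype m] [DecidableEq m]

theorem det_smul_one_sub_eq_of_mul_eq (u : R) {P A B : Matrix m m R}
    (hP : P.det ≠ 0) (hPAB : P * A = B * P) :
    (u • (1 : Matrix m m R) - A).det = (u • 1 - B).det := by
  have hconj : P * (u • 1 - A) = (u • 1 - B) * P := by
    rw [mul_sub, sub_mul, hPAB, Matrix.mul_smul, Matrix.smul_mul, mul_one, one_mul]
  have := congrArg det hconj
  rw [det_mul, det_mul, mul_comm] at this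
  exact mul_right_cancel₀ hP this

theorem det_smul_sub_mul_eq_det_mul (u : R) {G N V D : Matrix m m R}
    (hGN : G * N = V) (hN : N.det = V.det) (hV : V.det ≠ 0) :
    (u • N - D * V).det = (u • (1 : Matrix m m R) - G * D).det * V.det := by
  have hG : G.det = 1 := by
    have := congrArg det hGN
    rw [det_mul, hN] at this
    exact mul_right_cancel₀ hV (this.trans (one_mul _).symm)
  have hfactor : G * (u • N - D * V) = (u • 1 - G * D) * V := by
    rw [mul_sub, sub_mul, Matrix.mul_smul, hGN, Matrix.smul_mul, one_mul, mul_assoc]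
  simpa [hG] using congrArg det hfactor

end Similarity

theorem vandermonde_mul_diagonal_pow {R : Type*} [CommRing R] {n : ℕ} (c : R) (v : Fin n → R) :
    vandermonde v * diagonal (fun j : Fin n => c ^ (j : ℕ)) = vandermonde (c • v) := by
  ext i j
  simp [vandermonde_apply, mul_pow, mul_comm]

variable {K : Type*} [Field K] {n : ℕ}

noncomputable def lagrangeEval (x t : Fin n → K) : Matrix (Fin n) (Fin n) K :=
  of fun i b => ∏ k ∈ univ.erase b, (t i - x k) / (x b - x k)

open Polynomial in
theorem lagrangeEval_mul_vandermonde {x : Fin n → K} (hx : Function.Injective x)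
    (t : Fin n → K) : lagrangeEval x t * vandermonde x = vandermonde t := by
  ext i j
  have hdeg : ((X : K[X]) ^ (j : ℕ)).degree < #(univ : Finset (Fin n)) := by
    simp
  have := congrArg (eval (t i)) (Lagrange.eq_interpolate hx.injOn hdeg)
  simp only [Lagrange.interpolate_apply, eval_pow, eval_X, eval_finsetSum, eval_mul, eval_C,
    Lagrange.basis, eval_prod, Lagrange.basisDivisor, eval_sub] at this
  simp only [mul_apply, lagrangeEval, vandermonde_apply, of_apply, this, div_eq_inv_mul]
  exact sum_congr rfl fun b _ => mul_comm _ _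

end Matrix

section tRS

variable {K : Type*} [Field K] {n : ℕ} {ζ : Fin n → K} {h : K}

theorem prod_erase_sub_ne_zero (hζ : Function.Injective ζ) (i : Fin n) :
    ∏ k ∈ univ.erase i, (ζ i - ζ k) ≠ 0 :=
  prod_ne_zero_iff.mpr fun _ hk => sub_ne_zero.mpr (hζ.ne (ne_of_mem_erase hk).symm)

variable (ζ) in
noncomputable def tRSLagrange (h : K) : Matrix (Fin n) (Fin n) K :=
  h ^ (n - 1) • lagrangeEval (h ^ 2 • ζ) ζ

theorem tRSLagrange_mul_inv_pow_smul_vandermonde (hζ : Function.Injective ζ) (hh : h ≠ 0) :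
    tRSLagrange ζ h * ((h ^ (n - 1))⁻¹ • vandermonde (h ^ 2 • ζ)) = vandermonde ζ := by
  have hx : Function.Injective (h ^ 2 • ζ) :=
    (smul_right_injective K (pow_ne_zero 2 hh)).comp hζ
  rw [tRSLagrange, smul_mul_smul_comm, mul_inv_cancel₀ (pow_ne_zero _ hh), one_smul,
    lagrangeEval_mul_vandermonde hx]

theorem det_inv_pow_smul_vandermonde_sq_smul (hh : h ≠ 0) :
    ((h ^ (n - 1))⁻¹ • vandermonde (h ^ 2 • ζ)).det = (vandermonde ζ).det := by
  rw [det_smul, ← vandermonde_mul_diagonal_pow, det_mul, det_diagonal, Fin.prod_sq_pow_val,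
    Fintype.card_fin, inv_pow, mul_comm, mul_inv_cancel_right₀ (pow_ne_zero _ (pow_ne_zero _ hh))]

theorem tRSLagrange_mul_prod_erase_sub (hζ : Function.Injective ζ) (hh : h ≠ 0) (i b : Fin n) :
    tRSLagrange ζ h i b * ∏ k ∈ univ.erase b, (ζ b - ζ k)
      = ∏ k ∈ univ.erase b, (h⁻¹ * ζ i - h * ζ k) := by
  have hcard : #(univ.erase b) = n - 1 := by simp
  rw [tRSLagrange, Matrix.smul_apply, lagrangeEval, of_apply, smul_eq_mul, ← hcard, ← prod_const,
    ← prod_mul_distrib, ← prod_mul_distrib]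
  refine prod_congr rfl fun k hk => ?_
  have hbk : ζ b - ζ k ≠ 0 := sub_ne_zero.mpr (hζ.ne (ne_of_mem_erase hk).symm)
  simp only [Pi.smul_apply, smul_eq_mul]
  field_simp

theorem diagonal_prod_erase_sub_mul_tRSLax (p : Fin n → K) (hζ : Function.Injective ζ)
    (hh : h ≠ 0) :
    diagonal (fun i => ∏ k ∈ univ.erase i, (ζ i - ζ k)) * tRSLax n ζ p h
      = tRSLagrange ζ h * diagonal p * diagonal (fun i => ∏ k ∈ univ.erase i, (ζ i - ζ k)) := by
  ext i b
  have hi := prod_erase_sub_ne_zero hζ i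
  rw [diagonal_mul, mul_diagonal, mul_diagonal, tRSLax, of_apply, mul_right_comm,
    tRSLagrange_mul_prod_erase_sub hζ hh]
  field_simp

theorem Qfun_eq_det_div (p : Fin n → K) (hh : h ≠ 0) (u : K) :
    Qfun ζ p h n le_rfl u
      = (u • (h ^ (n - 1))⁻¹ • vandermonde (h ^ 2 • ζ) - diagonal p * vandermonde ζ).det
        / (vandermonde ζ).det := by
  rw [Qfun, Mdet, Vdet]
  congr 2
  ext a b
  have hn : 1 ≤ n := b.pos
  have hexp : h ^ (-((n : ℤ) - 1 - 2 * ((b : ℕ) : ℤ))) = (h ^ (n - 1))⁻¹ * (h ^ 2) ^ (b : ℕ) := by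
    rw [← pow_mul, ← zpow_natCast, ← zpow_natCast, ← _root_.zpow_neg, ← zpow_add₀ hh]
    congr 1
    push_cast [Nat.cast_sub hn]
    ring
  simp only [of_apply, Fin.eta, Matrix.sub_apply, Matrix.smul_apply, smul_eq_mul, diagonal_mul,
    vandermonde_apply, Pi.smul_apply, hexp]
  ring

end tRS

theorem stmt10_general {K : Type*} [Field K] (n : ℕ) (ζ p : Fin n → K) (h : K)
    (hζ : Function.Injective ζ) (hh : h ≠ 0) (u : K) :
    Qfun ζ p h n (le_refl n) u
      = (u • (1 : Matrix (Fin n) (Fin n) K) - tRSLax n ζ p h).det := by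
  have hV : (vandermonde ζ).det ≠ 0 := det_vandermonde_ne_zero_iff.mpr hζ
  have hd : (diagonal fun i => ∏ k ∈ univ.erase i, (ζ i - ζ k)).det ≠ 0 := by
    rw [det_diagonal]
    exact prod_ne_zero_iff.mpr fun i _ => prod_erase_sub_ne_zero hζ i
  rw [Qfun_eq_det_div p hh, det_smul_sub_mul_eq_det_mul u
    (tRSLagrange_mul_inv_pow_smul_vandermonde hζ hh) (det_inv_pow_smul_vandermonde_sq_smul hh) hV,
    mul_div_cancel_right₀ _ hV]
  exact (det_smul_one_sub_eq_of_mul_eq u hd (diagonal_prod_erase_sub_mul_tRSLax p hζ hh)).symm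

/-- Q_n(u) = det(u·I − L). -/
theorem stmt10 {K : Type*} [Field K] (n : ℕ) (ζ p : Fin n → K) (h : K)
    (hζ : Function.Injective ζ) (hζ0 : ∀ i, ζ i ≠ 0) (hh : h ≠ 0) (u : K) :
    Qfun ζ p h n (le_refl n) u
      = (u • (1 : Matrix (Fin n) (Fin n) K) - tRSLax n ζ p h).det :=
  stmt10_general n ζ p h hζ hh u
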